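/- arXiv:1202.6352 — 3 statements merged into one kernel-verified Lean document; each statement's English description precedes it below -/
import Mathlib

section
/- SAT-Skolemization, step 2: let A = A₁ ∧ ⋯ ∧ Aₘ where A₁, …, Aₘ are closed prenex formulas of first-order Gödel logic with △ and q is a fresh monadic predicate symbol. Then ∃x q(x) ∧ sk_q(A₁) ∧ ⋯ ∧ sk_q(Aₘ) is 1-satisfiable if and only if Hex(q,A) ∧ sk_q(A₁) ∧ ⋯ ∧ sk_q(Aₘ) is 1-satisfiable. -/
/-! Semantics of first-order Gödel logic with the projection operator `△` (G△),
with truth values in the complete lattice `[0,1]`. -/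

/-- The unit interval `[0,1]` is a complete lattice. -/
instance : Fact ((0:ℝ) ≤ 1) := ⟨zero_le_one⟩

/-- Gödel implication on `[0,1]`. -/
noncomputable def gimp (a b : unitInterval) : unitInterval := if a ≤ b then 1 else b

/-- The projection `△` on `[0,1]`. -/
noncomputable def gdelta (a : unitInterval) : unitInterval := if a = 1 then 1 else 0

/-- A first-order signature: function symbols and predicate symbols with arities. -/
structure Signature : Type 1 where
  Func : Type
  fArity : Func → ℕ
  Pred : Type
  pArity : Pred → ℕ

/-- Terms over a signature; variables are indexed by natural numbers. -/
inductive Term (S : Signature) : Type where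
  | var (n : ℕ) : Term S
  | func (f : S.Func) (args : Fin (S.fArity f) → Term S) : Term S

namespace Term

variable {S : Signature}

/-- The set of variables occurring in a term. -/
def vars : Term S → Set ℕ
  | .var n => {n}
  | .func _ args => ⋃ i, (args i).vars

/-- The set of function symbols (including constants) occurring in a term. -/
def funcsIn : Term S → Set S.Func
  | .var _ => ∅
  | .func f args => insert f (⋃ i, (args i).funcsIn)

/-- A term is ground if it contains no variables. -/
def isGround : Term S → Prop
  | .var _ => False
  | .func _ args => ∀ i, (args i).isGround

/-- Simultaneous substitution of terms for variables in a term. -/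
def subst (σ : ℕ → Term S) : Term S → Term S
  | .var n => σ n
  | .func f args => .func f (fun i => (args i).subst σ)

end Term

/-- Formulas of first-order Gödel logic with `△`. -/
inductive Formula (S : Signature) : Type where
  | bot : Formula S
  | top : Formula S
  | atom (p : S.Pred) (args : Fin (S.pArity p) → Term S) : Formula S
  | and (A B : Formula S) : Formula S
  | or (A B : Formula S) : Formula S
  | imp (A B : Formula S) : Formula S
  | delta (A : Formula S) : Formula S
  | all (x : ℕ) (A : Formula S) : Formula S
  | ex (x : ℕ) (A : Formula S) : Formula S

namespace Formula

variable {S : Signature}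

/-- Gödel negation `¬A := A → ⊥`. -/
def neg (A : Formula S) : Formula S := A.imp .bot

/-- The set of free variables of a formula. -/
def freeVars : Formula S → Set ℕ
  | .bot => ∅
  | .top => ∅
  | .atom _ args => ⋃ i, (args i).vars
  | .and A B => A.freeVars ∪ B.freeVars
  | .or A B => A.freeVars ∪ B.freeVars
  | .imp A B => A.freeVars ∪ B.freeVars
  | .delta A => A.freeVars
  | .all x A => A.freeVars \ {x}
  | .ex x A => A.freeVars \ {x}

/-- The set of function symbols occurring in a formula. -/
def funcsIn : Formula S → Set S.Func
  | .bot => ∅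
  | .top => ∅
  | .atom _ args => ⋃ i, (args i).funcsIn
  | .and A B => A.funcsIn ∪ B.funcsIn
  | .or A B => A.funcsIn ∪ B.funcsIn
  | .imp A B => A.funcsIn ∪ B.funcsIn
  | .delta A => A.funcsIn
  | .all _ A => A.funcsIn
  | .ex _ A => A.funcsIn

/-- The set of predicate symbols occurring in a formula. -/
def predsIn : Formula S → Set S.Pred
  | .bot => ∅
  | .top => ∅
  | .atom p _ => {p}
  | .and A B => A.predsIn ∪ B.predsIn
  | .or A B => A.predsIn ∪ B.predsIn
  | .imp A B => A.predsIn ∪ B.predsIn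
  | .delta A => A.predsIn
  | .all _ A => A.predsIn
  | .ex _ A => A.predsIn

/-- A formula is quantifier free. -/
def isQF : Formula S → Prop
  | .bot => True
  | .top => True
  | .atom _ _ => True
  | .and A B => A.isQF ∧ B.isQF
  | .or A B => A.isQF ∧ B.isQF
  | .imp A B => A.isQF ∧ B.isQF
  | .delta A => A.isQF
  | .all _ _ => False
  | .ex _ _ => False

/-- Simultaneous substitution of terms for the free variables of a formula
(bound variables are left untouched). -/
def subst (σ : ℕ → Term S) : Formula S → Formula S
  | .bot => .bot
  | .top => .top
  | .atom p args => .atom p (fun i => (args i).subst σ)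
  | .and A B => .and (A.subst σ) (B.subst σ)
  | .or A B => .or (A.subst σ) (B.subst σ)
  | .imp A B => .imp (A.subst σ) (B.subst σ)
  | .delta A => .delta (A.subst σ)
  | .all x A => .all x (A.subst (Function.update σ x (.var x)))
  | .ex x A => .ex x (A.subst (Function.update σ x (.var x)))

/-- Substitution of a single term `t` for the variable `x`. -/
def subst1 (x : ℕ) (t : Term S) (A : Formula S) : Formula S :=
  A.subst (fun n => if n = x then t else .var n)

end Formula

/-- An interpretation: a nonempty domain, interpretations of the function symbols,
and `[0,1]`-valued interpretations of the predicate symbols. -/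
structure Interp (S : Signature) : Type 1 where
  D : Type
  dNe : Nonempty D
  fI : ∀ f : S.Func, (Fin (S.fArity f) → D) → D
  pI : ∀ p : S.Pred, (Fin (S.pArity p) → D) → unitInterval

attribute [instance] Interp.dNe

/-- Evaluation of a term in an interpretation under a variable assignment. -/
def Term.eval {S : Signature} (I : Interp S) (μ : ℕ → I.D) : Term S → I.D
  | .var n => μ n
  | .func f args => I.fI f (fun i => (args i).eval I μ)

/-- The Gödel value `‖A‖ ∈ [0,1]` of a formula in an interpretation under a variable
assignment; `∀` is interpreted by the infimum and `∃` by the supremum. -/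
noncomputable def Formula.val {S : Signature} (I : Interp S) (μ : ℕ → I.D) :
    Formula S → unitInterval
  | .bot => 0
  | .top => 1
  | .atom p args => I.pI p (fun i => (args i).eval I μ)
  | .and A B => min (A.val I μ) (B.val I μ)
  | .or A B => max (A.val I μ) (B.val I μ)
  | .imp A B => gimp (A.val I μ) (B.val I μ)
  | .delta A => gdelta (A.val I μ)
  | .all x A => ⨅ d : I.D, A.val I (Function.update μ x d)
  | .ex x A => ⨆ d : I.D, A.val I (Function.update μ x d)

/-- A formula is valid if it takes value `1` in every interpretation, under every
variable assignment. -/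
def valid {S : Signature} (A : Formula S) : Prop :=
  ∀ (I : Interp S) (μ : ℕ → I.D), A.val I μ = 1

/-- A formula is 1-satisfiable if it takes value `1` in some interpretation. -/
def sat1 {S : Signature} (A : Formula S) : Prop :=
  ∃ (I : Interp S) (μ : ℕ → I.D), A.val I μ = 1

/-- `exCloseList [x₁,…,xₙ] P = ∃x₁ … ∃xₙ P`. -/
def exCloseList {S : Signature} : List ℕ → Formula S → Formula S
  | [], P => P
  | x :: xs, P => .ex x (exCloseList xs P)

/-- `allCloseList [x₁,…,xₙ] P = ∀x₁ … ∀xₙ P`. -/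
def allCloseList {S : Signature} : List ℕ → Formula S → Formula S
  | [], P => P
  | x :: xs, P => .all x (allCloseList xs P)

/-- `buildPrenex [Q₁,…,Qₙ] i P = Q₁ zᵢ Q₂ z_{i+1} … Qₙ z_{i+n-1} P`, where `true`
codes `∀` and `false` codes `∃`; the bound variables are the indices `i, i+1, …`. -/
def buildPrenex {S : Signature} : List Bool → ℕ → Formula S → Formula S
  | [], _, P => P
  | b :: rest, i, P =>
      if b then .all i (buildPrenex rest (i + 1) P)
      else .ex i (buildPrenex rest (i + 1) P)

/-- The positions (= variables) of the existential quantifiers in a prenex prefix. -/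
def exPos (pref : List Bool) : List ℕ :=
  (List.range pref.length).filter (fun i => pref.getD i true = false)

/-- The positions (= variables) of the universal quantifiers in a prenex prefix. -/
def univPos (pref : List Bool) : List ℕ :=
  (List.range pref.length).filter (fun i => pref.getD i false = true)

/-- `bigOr A [B₁,…,Bₙ] = A ∨ B₁ ∨ … ∨ Bₙ`. -/
def bigOr {S : Signature} : Formula S → List (Formula S) → Formula S
  | A, [] => A
  | A, B :: rest => .or A (bigOr B rest)

/-- `bigAnd A [B₁,…,Bₙ] = A ∧ B₁ ∧ … ∧ Bₙ`. -/
def bigAnd {S : Signature} : Formula S → List (Formula S) → Formula S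
  | A, [] => A
  | A, B :: rest => .and A (bigAnd B rest)

/-- The SAT-Skolem substitution (Definition of `Ψ_q`): each existentially quantified
variable `i` is replaced by the Skolem term `f i (zᵢ, z₀, …, z_{i-1})` (the guard
variable `zᵢ` followed by the free variables at that point); universal variables are
kept. -/
def skSubstSatQ {S : Signature} (pref : List Bool) (skf : ℕ → S.Func) : ℕ → Term S :=
  fun i =>
    if pref.getD i true = false then
      Term.func (skf i)
        (fun j => Term.var (if (j : ℕ) = 0 then i else (j : ℕ) - 1))
    else Term.var i

/-- The atom `q(t)` for a monadic predicate symbol `q`. -/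
def qAtom {S : Signature} (q : S.Pred) (t : Term S) : Formula S :=
  .atom q (fun _ => t)

/-- `guards q [i₁,…,iₙ] B = q(z_{i₁}) → (q(z_{i₂}) → … (q(z_{iₙ}) → B))`:
the guards `q(x) → ·` produced by `Ψ_q` at the existential positions. -/
def guards {S : Signature} (q : S.Pred) : List ℕ → Formula S → Formula S
  | [], B => B
  | i :: xs, B => .imp (qAtom q (.var i)) (guards q xs B)

/-- The SAT-Skolem form `sk_q(A) = ∀x̄ △(Ψ_q(A)⁻)` of the prenex formula with prefix
`pref` and quantifier-free matrix `P`. -/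
def skq {S : Signature} (q : S.Pred) (skf : ℕ → S.Func) (pref : List Bool)
    (P : Formula S) : Formula S :=
  allCloseList (List.range pref.length)
    (.delta (guards q (exPos pref) (P.subst (skSubstSatQ pref skf))))

/-- The formula `∃x q(x)`. -/
def exQ {S : Signature} (q : S.Pred) : Formula S := .ex 0 (qAtom q (.var 0))

/-- `A ⊴ B := △(A → B)`. -/
def dleF {S : Signature} (A B : Formula S) : Formula S := .delta (A.imp B)

/-- `A ◁ B := ¬△(B → A)`. -/
def dlF {S : Signature} (A B : Formula S) : Formula S := (Formula.delta (B.imp A)).imp .bot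

/-- The `Hex` conjunct for a predicate symbol `p`:
`∀ȳ (⊤ ⊴ p(ȳ) ∨ p(ȳ) ◁ q(f_p(ȳ)))`. -/
def hexConj {S : Signature} (q : S.Pred) (fp : S.Pred → S.Func) (p : S.Pred) :
    Formula S :=
  allCloseList (List.range (S.pArity p))
    (Formula.or
      (dleF .top (.atom p (fun k => .var (k : ℕ))))
      (dlF (.atom p (fun k => .var (k : ℕ)))
        (qAtom q (.func (fp p) (fun k => .var (k : ℕ))))))

/-- Conjunction of a list of formulas (`⊤` for the empty list). -/
def bigAndL {S : Signature} : List (Formula S) → Formula S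
  | [] => .top
  | [A] => A
  | A :: rest => .and A (bigAndL rest)

/-- `Hex(q,A)`: the conjunction of the `Hex` conjuncts over the predicate symbols
`p₁,…,p_k` occurring in `sk_q(A)`. -/
def hexFormula {S : Signature} (q : S.Pred) (fp : S.Pred → S.Func)
    (ps : List S.Pred) : Formula S :=
  bigAndL (ps.map (hexConj q fp))

/-! (→) In a model of `∃x q(x)` the supremum of `q` is `1`, so whenever `p(ȳ) < 1` some point
has a larger `q`-value; interpreting the fresh `f_p(ȳ)` as such a point makes `Hex(q,A)` true and
leaves the Skolem forms untouched.

(←) `Hex` for `q` itself puts every `q`-value strictly below `s = sup q` unless `s = 1`, and for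
the other predicates it makes every atom value either `1` or below `s`. Rescaling `[0,s)` linearly
onto `[0,1)` and collapsing `[s,1]` to `1` is strictly monotone on these values and fixes `0` and
`1`, so it preserves the value of every `△`-guarded quantifier-free matrix, hence of the Skolem
forms, while it raises `sup q` to `1`. -/

namespace unitInterval

variable {a b : unitInterval}

lemma min_eq_one : min a b = 1 ↔ a = 1 ∧ b = 1 := min_eq_top

lemma max_eq_one : max a b = 1 ↔ a = 1 ∨ b = 1 := max_eq_top

lemma one_le_iff_eq : 1 ≤ a ↔ a = 1 := top_le_iff

lemma iInf_eq_one {ι : Sort*} {f : ι → unitInterval} : ⨅ i, f i = 1 ↔ ∀ i, f i = 1 :=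
  iInf_eq_top

lemma iSup_eq_one {ι : Sort*} {f : ι → unitInterval} :
    ⨆ i, f i = 1 ↔ ∀ b < 1, ∃ i, b < f i :=
  iSup_eq_top

end unitInterval

lemma gimp_eq_one {a b : unitInterval} : gimp a b = 1 ↔ a ≤ b := by
  unfold gimp
  split_ifs with h
  · exact iff_of_true rfl h
  · exact iff_of_false (fun h1 => h (h1 ▸ unitInterval.le_one')) h

lemma gdelta_eq_one {a : unitInterval} : gdelta a = 1 ↔ a = 1 := by
  unfold gdelta
  split_ifs with h
  · exact iff_of_true rfl h
  · exact iff_of_false zero_ne_one h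

lemma gdelta_eq_zero {a : unitInterval} : gdelta a = 0 ↔ a ≠ 1 := by
  unfold gdelta
  split_ifs with h
  · exact iff_of_false one_ne_zero (not_not.2 h)
  · exact iff_of_true rfl h

lemma gimp_zero_eq_one {a : unitInterval} : gimp a 0 = 1 ↔ a = 0 := by
  rw [gimp_eq_one, nonpos_iff_eq_zero]

structure TruthEmbedding (g : unitInterval → unitInterval) (V : Set unitInterval) : Prop where
  zero_mem : 0 ∈ V
  one_mem : 1 ∈ V
  map_zero : g 0 = 0
  map_one : g 1 = 1
  strictMonoOn : StrictMonoOn g V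

namespace TruthEmbedding

variable {g : unitInterval → unitInterval} {V : Set unitInterval} {a b : unitInterval}

lemma map_eq_one_iff (hg : TruthEmbedding g V) (ha : a ∈ V) : g a = 1 ↔ a = 1 := by
  refine ⟨fun h => hg.strictMonoOn.injOn ha hg.one_mem (h.trans hg.map_one.symm), ?_⟩
  rintro rfl
  exact hg.map_one

lemma gimp_map (hg : TruthEmbedding g V) (ha : a ∈ V) (hb : b ∈ V) :
    gimp (g a) (g b) = g (gimp a b) := by
  unfold gimp
  simp only [hg.strictMonoOn.le_iff_le ha hb]
  split_ifs
  · exact hg.map_one.symm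
  · rfl

lemma gdelta_map (hg : TruthEmbedding g V) (ha : a ∈ V) : gdelta (g a) = g (gdelta a) := by
  unfold gdelta
  simp only [hg.map_eq_one_iff ha]
  split_ifs
  · exact hg.map_one.symm
  · exact hg.map_zero.symm

lemma gdelta_map_eq (hg : TruthEmbedding g V) (ha : a ∈ V) : gdelta (g a) = gdelta a := by
  unfold gdelta
  simp only [hg.map_eq_one_iff ha]

end TruthEmbedding

namespace Interp

variable {S : Signature}

abbrev withFuncs (I : Interp S) (F : ∀ f : S.Func, (Fin (S.fArity f) → I.D) → I.D) :
    Interp S :=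
  { I with fI := F }

abbrev mapVals (I : Interp S) (g : unitInterval → unitInterval) : Interp S :=
  { I with pI := fun p args => g (I.pI p args) }

end Interp

namespace Term

variable {S : Signature} {I : Interp S} {μ : ℕ → I.D}

lemma eval_withFuncs {F : ∀ f : S.Func, (Fin (S.fArity f) → I.D) → I.D} {t : Term S}
    (hF : ∀ f ∈ t.funcsIn, F f = I.fI f) : t.eval (I.withFuncs F) μ = t.eval I μ := by
  induction t with
  | var n => rfl
  | func f args ih =>
    simp only [funcsIn, Set.mem_insert_iff, Set.mem_iUnion] at hF
    change F f _ = I.fI f _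
    rw [hF f (Or.inl rfl)]
    exact congrArg _ (funext fun i => ih i fun f' hf' => hF f' (Or.inr ⟨i, hf'⟩))

lemma eval_mapVals {g : unitInterval → unitInterval} (t : Term S) :
    t.eval (I.mapVals g) μ = t.eval I μ := by
  induction t with
  | var n => rfl
  | func f args ih => exact congrArg (I.fI f) (funext ih)

lemma funcsIn_subst (σ : ℕ → Term S) (t : Term S) :
    (t.subst σ).funcsIn ⊆ t.funcsIn ∪ ⋃ n, (σ n).funcsIn := by
  induction t with
  | var n => exact fun f hf => Or.inr (Set.mem_iUnion.2 ⟨n, hf⟩)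
  | func f args ih =>
    simp only [subst, funcsIn]
    refine Set.insert_subset (Or.inl (Set.mem_insert _ _)) (Set.iUnion_subset fun i => ?_)
    exact (ih i).trans (Set.union_subset_union_left _
      ((Set.subset_iUnion (fun j => (args j).funcsIn) i).trans (Set.subset_insert _ _)))

end Term

namespace Formula

variable {S : Signature} {I : Interp S}

lemma val_withFuncs {F : ∀ f : S.Func, (Fin (S.fArity f) → I.D) → I.D} (A : Formula S)
    (hF : ∀ f ∈ A.funcsIn, F f = I.fI f) (μ : ℕ → I.D) :
    A.val (I.withFuncs F) μ = A.val I μ := by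
  induction A generalizing μ with
  | bot | top => rfl
  | atom p args =>
    simp only [funcsIn, Set.mem_iUnion] at hF
    exact congrArg (I.pI p) (funext fun i => Term.eval_withFuncs fun f hf => hF f ⟨i, hf⟩)
  | and A B ihA ihB | or A B ihA ihB | imp A B ihA ihB =>
    simp only [funcsIn, Set.mem_union] at hF
    simp only [val, ihA (fun f hf => hF f (Or.inl hf)), ihB (fun f hf => hF f (Or.inr hf))]
  | delta A ih => simp only [val, ih hF]
  | all x A ih => exact iInf_congr fun d => ih hF _
  | ex x A ih => exact iSup_congr fun d => ih hF _

lemma predsIn_subst (σ : ℕ → Term S) (A : Formula S) : (A.subst σ).predsIn = A.predsIn := by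
  induction A generalizing σ with
  | bot | top | atom => rfl
  | and A B ihA ihB | or A B ihA ihB | imp A B ihA ihB => simp only [subst, predsIn, ihA, ihB]
  | delta A ih | all x A ih | ex x A ih => exact ih _

lemma isQF_subst (σ : ℕ → Term S) {A : Formula S} (hA : A.isQF) : (A.subst σ).isQF := by
  induction A with
  | bot | top | atom => trivial
  | and A B ihA ihB | or A B ihA ihB | imp A B ihA ihB => exact ⟨ihA hA.1, ihB hA.2⟩
  | delta A ih => exact ih hA
  | all | ex => exact hA.elim

lemma funcsIn_subst (σ : ℕ → Term S) (A : Formula S) :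
    (A.subst σ).funcsIn ⊆ A.funcsIn ∪ ⋃ n, (σ n).funcsIn := by
  induction A generalizing σ with
  | bot | top => exact Set.empty_subset _
  | atom p args =>
    refine Set.iUnion_subset fun i => (Term.funcsIn_subst σ (args i)).trans ?_
    exact Set.union_subset_union_left _ (Set.subset_iUnion (fun j => (args j).funcsIn) i)
  | and A B ihA ihB | or A B ihA ihB | imp A B ihA ihB =>
    exact Set.union_subset
      ((ihA σ).trans (Set.union_subset_union_left _ Set.subset_union_left))
      ((ihB σ).trans (Set.union_subset_union_left _ Set.subset_union_right))
  | delta A ih => exact ih σ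
  | all x A ih | ex x A ih =>
    refine (ih _).trans (Set.union_subset_union_right _ (Set.iUnion_subset fun n => ?_))
    rcases eq_or_ne n x with rfl | hne
    · simp [Term.funcsIn]
    · rw [Function.update_of_ne hne]
      exact Set.subset_iUnion (fun k => (σ k).funcsIn) n

lemma val_mem_of_isQF {V : Set unitInterval} (h0 : 0 ∈ V) (h1 : 1 ∈ V) {A : Formula S}
    (hA : A.isQF) (hV : ∀ p ∈ A.predsIn, ∀ args, I.pI p args ∈ V) (μ : ℕ → I.D) :
    A.val I μ ∈ V := by
  induction A with
  | bot => exact h0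
  | top => exact h1
  | atom p args => exact hV p rfl _
  | and A B ihA ihB =>
    change min _ _ ∈ V
    rcases min_choice (A.val I μ) (B.val I μ) with h | h <;> rw [h]
    exacts [ihA hA.1 fun p hp => hV p (Or.inl hp), ihB hA.2 fun p hp => hV p (Or.inr hp)]
  | or A B ihA ihB =>
    change max _ _ ∈ V
    rcases max_choice (A.val I μ) (B.val I μ) with h | h <;> rw [h]
    exacts [ihA hA.1 fun p hp => hV p (Or.inl hp), ihB hA.2 fun p hp => hV p (Or.inr hp)]
  | imp A B ihA ihB =>
    change gimp _ _ ∈ V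
    unfold gimp
    split_ifs
    exacts [h1, ihB hA.2 fun p hp => hV p (Or.inr hp)]
  | delta A ih =>
    change gdelta _ ∈ V
    unfold gdelta
    split_ifs
    exacts [h1, h0]
  | all | ex => exact hA.elim

end Formula

lemma TruthEmbedding.val_mapVals {S : Signature} {I : Interp S} {g : unitInterval → unitInterval}
    {V : Set unitInterval} (hg : TruthEmbedding g V) {A : Formula S} (hA : A.isQF)
    (hV : ∀ p ∈ A.predsIn, ∀ args, I.pI p args ∈ V) (μ : ℕ → I.D) :
    A.val (I.mapVals g) μ = g (A.val I μ) := by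
  induction A with
  | bot => exact hg.map_zero.symm
  | top => exact hg.map_one.symm
  | atom p args => exact congrArg (g ∘ I.pI p) (funext fun i => Term.eval_mapVals (args i))
  | and A B ihA ihB | or A B ihA ihB | imp A B ihA ihB =>
    have hVA : ∀ p ∈ A.predsIn, ∀ args, I.pI p args ∈ V := fun p hp => hV p (Or.inl hp)
    have hVB : ∀ p ∈ B.predsIn, ∀ args, I.pI p args ∈ V := fun p hp => hV p (Or.inr hp)
    have hAV := Formula.val_mem_of_isQF hg.zero_mem hg.one_mem hA.1 hVA μ
    have hBV := Formula.val_mem_of_isQF hg.zero_mem hg.one_mem hA.2 hVB μ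
    simp only [Formula.val, ihA hA.1 hVA, ihB hA.2 hVB]
    first
    | exact (hg.strictMonoOn.monotoneOn.map_min hAV hBV).symm
    | exact (hg.strictMonoOn.monotoneOn.map_max hAV hBV).symm
    | exact hg.gimp_map hAV hBV
  | delta A ih =>
    simp only [Formula.val, ih hA hV]
    exact hg.gdelta_map (Formula.val_mem_of_isQF (A := A) hg.zero_mem hg.one_mem hA hV μ)
  | all | ex => exact hA.elim

section Semantics

variable {S : Signature} {I : Interp S}

lemma val_allCloseList_eq_one (xs : List ℕ) (B : Formula S) (μ : ℕ → I.D) :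
    (allCloseList xs B).val I μ = 1 ↔
      ∀ ν : ℕ → I.D, (∀ n ∉ xs, ν n = μ n) → B.val I ν = 1 := by
  induction xs generalizing μ with
  | nil =>
    refine ⟨fun h ν hν => ?_, fun h => h μ fun _ _ => rfl⟩
    rwa [funext fun n => hν n List.not_mem_nil]
  | cons x xs ih =>
    simp only [allCloseList, Formula.val, unitInterval.iInf_eq_one, ih]
    refine ⟨fun h ν hν => h (ν x) ν fun n hn => ?_, fun h d ν hν => h ν fun n hn => ?_⟩
    · rcases eq_or_ne n x with rfl | hne
      · simp
      · rw [Function.update_of_ne hne]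
        exact hν n (by simp [hn, hne])
    · simp only [List.mem_cons, not_or] at hn
      rw [hν n hn.2, Function.update_of_ne hn.1]

lemma val_allCloseList_delta_mapVals {g : unitInterval → unitInterval} {V : Set unitInterval}
    (hg : TruthEmbedding g V) (xs : List ℕ) {B : Formula S} (hB : B.isQF)
    (hV : ∀ p ∈ B.predsIn, ∀ args, I.pI p args ∈ V) (μ : ℕ → I.D) :
    (allCloseList xs (.delta B)).val (I.mapVals g) μ =
      (allCloseList xs (.delta B)).val I μ := by
  induction xs generalizing μ with
  | nil =>
    change gdelta _ = gdelta _
    rw [hg.val_mapVals hB hV,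
      hg.gdelta_map_eq (Formula.val_mem_of_isQF hg.zero_mem hg.one_mem hB hV μ)]
  | cons x xs ih => exact iInf_congr fun d => ih _

lemma Formula.val_and_eq_one {A B : Formula S} {μ : ℕ → I.D} :
    (A.and B).val I μ = 1 ↔ A.val I μ = 1 ∧ B.val I μ = 1 :=
  unitInterval.min_eq_one

lemma val_bigAnd_eq_one (A : Formula S) (l : List (Formula S)) (μ : ℕ → I.D) :
    (bigAnd A l).val I μ = 1 ↔ ∀ B ∈ A :: l, B.val I μ = 1 := by
  induction l generalizing A with
  | nil => simp [bigAnd]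
  | cons B l ih =>
    rw [bigAnd, Formula.val, unitInterval.min_eq_one, ih, List.forall_mem_cons (l := B :: l)]

lemma val_bigAnd_ofFn_eq_one {m : ℕ} (A : Fin (m + 1) → Formula S) (μ : ℕ → I.D) :
    (bigAnd (A 0) (List.ofFn fun i : Fin m => A i.succ)).val I μ = 1 ↔
      ∀ i, (A i).val I μ = 1 := by
  rw [val_bigAnd_eq_one, ← List.ofFn_succ, List.forall_mem_ofFn_iff]

lemma val_bigAndL_eq_one (l : List (Formula S)) (μ : ℕ → I.D) :
    (bigAndL l).val I μ = 1 ↔ ∀ B ∈ l, B.val I μ = 1 := by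
  induction l with
  | nil => exact iff_of_true rfl (by simp)
  | cons A l ih =>
    cases l with
    | nil => simp [bigAndL]
    | cons B l =>
      change (Formula.and A _).val I μ = 1 ↔ _
      rw [Formula.val, unitInterval.min_eq_one, ih, List.forall_mem_cons (l := B :: l)]

lemma val_dleF_eq_one {A B : Formula S} {μ : ℕ → I.D} :
    (dleF A B).val I μ = 1 ↔ A.val I μ ≤ B.val I μ :=
  gdelta_eq_one.trans gimp_eq_one

lemma val_dlF_eq_one {A B : Formula S} {μ : ℕ → I.D} :
    (dlF A B).val I μ = 1 ↔ A.val I μ < B.val I μ := by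
  change gimp (gdelta (gimp _ _)) 0 = 1 ↔ _
  rw [gimp_zero_eq_one, gdelta_eq_zero, Ne, gimp_eq_one, not_le]

lemma val_exQ (q : S.Pred) (μ : ℕ → I.D) :
    (exQ q).val I μ = ⨆ d : I.D, I.pI q (fun _ => d) := by
  simp [exQ, qAtom, Formula.val, Term.eval]

variable {q : S.Pred} {fp : S.Pred → S.Func}

lemma val_hexConj_eq_one {p : S.Pred} (har : S.fArity (fp p) = S.pArity p) {μ : ℕ → I.D} :
    (hexConj q fp p).val I μ = 1 ↔ ∀ ν : ℕ → I.D, I.pI p (fun k => ν k) = 1 ∨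
      I.pI p (fun k => ν k) < I.pI q (fun _ => I.fI (fp p) (fun k => ν k)) := by
  simp only [hexConj, val_allCloseList_eq_one, Formula.val, unitInterval.max_eq_one,
    val_dleF_eq_one, val_dlF_eq_one, qAtom, Term.eval, unitInterval.one_le_iff_eq, List.mem_range]
  refine ⟨fun h ν => ?_, fun h ν _ => h ν⟩
  have hlt (k : Fin (S.fArity (fp p))) : (k : ℕ) < S.pArity p := har ▸ k.isLt
  simpa [hlt] using h (fun n => if n < S.pArity p then ν n else μ n) fun n hn => if_neg hn

lemma eq_one_or_lt_of_val_hexConj_eq_one {p : S.Pred} (har : S.fArity (fp p) = S.pArity p)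
    {μ : ℕ → I.D} (h : (hexConj q fp p).val I μ = 1) (args : Fin (S.pArity p) → I.D) :
    I.pI p args = 1 ∨ ∃ d, I.pI p args < I.pI q (fun _ => d) := by
  have hargs := (val_hexConj_eq_one har).1 h
    (fun n => if hn : n < S.pArity p then args ⟨n, hn⟩ else μ n)
  simp only [Fin.is_lt, dif_pos, Fin.eta] at hargs
  exact hargs.imp_right fun hlt => ⟨_, hlt⟩

lemma val_hexFormula_eq_one {ps : List S.Pred} {μ : ℕ → I.D} :
    (hexFormula q fp ps).val I μ = 1 ↔ ∀ p ∈ ps, (hexConj q fp p).val I μ = 1 := by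
  rw [hexFormula, val_bigAndL_eq_one, List.forall_mem_map]

end Semantics

section SkolemForm

variable {S : Signature} (q : S.Pred)

lemma isQF_guards (xs : List ℕ) {B : Formula S} (hB : B.isQF) : (guards q xs B).isQF := by
  induction xs with
  | nil => exact hB
  | cons x xs ih => exact ⟨trivial, ih⟩

lemma predsIn_guards (xs : List ℕ) (B : Formula S) :
    (guards q xs B).predsIn ⊆ insert q B.predsIn := by
  induction xs with
  | nil => exact Set.subset_insert _ _
  | cons x xs ih => exact Set.union_subset (Set.singleton_subset_iff.2 (Set.mem_insert _ _)) ih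

lemma funcsIn_guards (xs : List ℕ) (B : Formula S) : (guards q xs B).funcsIn ⊆ B.funcsIn := by
  induction xs with
  | nil => exact subset_rfl
  | cons x xs ih =>
    exact Set.union_subset (by simp [qAtom, Formula.funcsIn, Term.funcsIn]) ih

lemma funcsIn_allCloseList (xs : List ℕ) (A : Formula S) :
    (allCloseList xs A).funcsIn = A.funcsIn := by
  induction xs with
  | nil => rfl
  | cons x xs ih => exact ih

lemma mem_exPos {pref : List Bool} {j : ℕ} : j ∈ exPos pref ↔ pref.getD j true = false := by
  simp only [exPos, List.mem_filter, List.mem_range, decide_eq_true_eq, and_iff_right_iff_imp]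
  intro h
  by_contra hj
  rw [List.getD_eq_default _ _ (not_lt.1 hj)] at h
  exact Bool.noConfusion h

lemma funcsIn_skq (skf : ℕ → S.Func) (pref : List Bool) (P : Formula S) :
    (skq q skf pref P).funcsIn ⊆ P.funcsIn ∪ {f | ∃ j ∈ exPos pref, skf j = f} := by
  rw [skq, funcsIn_allCloseList]
  refine (funcsIn_guards q _ _).trans ((Formula.funcsIn_subst _ P).trans
    (Set.union_subset_union_right _ (Set.iUnion_subset fun n => ?_)))
  unfold skSubstSatQ
  split_ifs with hn
  · exact Set.insert_subset ⟨n, mem_exPos.2 hn, rfl⟩ (by simp [Term.funcsIn])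
  · exact Set.empty_subset _

lemma val_skq_mapVals {I : Interp S} {g : unitInterval → unitInterval} {V : Set unitInterval}
    (hg : TruthEmbedding g V) (skf : ℕ → S.Func) (pref : List Bool) {P : Formula S}
    (hP : P.isQF) (hV : ∀ p ∈ insert q P.predsIn, ∀ args, I.pI p args ∈ V)
    (μ : ℕ → I.D) :
    (skq q skf pref P).val (I.mapVals g) μ = (skq q skf pref P).val I μ := by
  refine val_allCloseList_delta_mapVals hg _ (isQF_guards q _ (Formula.isQF_subst _ hP))
    (fun p hp => hV p ?_) μ
  simpa only [Formula.predsIn_subst] using predsIn_guards q _ _ hp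

end SkolemForm

noncomputable def compress (s a : unitInterval) : unitInterval :=
  if h : a < s then ⟨a / s, unitInterval.div_mem a.2.1 s.2.1 h.le⟩ else 1

section Compress

variable {s a : unitInterval}

lemma coe_compress_of_lt (h : a < s) : (compress s a : ℝ) = a / s := by
  simp [compress, h]

lemma compress_of_le (h : s ≤ a) : compress s a = 1 := by
  simp [compress, not_lt.2 h]

lemma truthEmbedding_compress (hs : 0 < s) :
    TruthEmbedding (compress s) {a | a = 1 ∨ a < s} where
  zero_mem := Or.inr hs
  one_mem := Or.inl rfl
  map_zero := Subtype.ext (by rw [coe_compress_of_lt hs]; simp)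
  map_one := compress_of_le unitInterval.le_one'
  strictMonoOn := by
    have hs' : (0 : ℝ) < s := hs
    rintro a (rfl | ha) b (rfl | hb) hab
    · exact (lt_irrefl _ hab).elim
    · exact (not_lt.2 unitInterval.le_one' hab).elim
    · rw [compress_of_le unitInterval.le_one', ← Subtype.coe_lt_coe, coe_compress_of_lt ha]
      exact (div_lt_one hs').2 ha
    · rw [← Subtype.coe_lt_coe, coe_compress_of_lt ha, coe_compress_of_lt hb]
      exact div_lt_div_of_pos_right hab hs'

lemma iSup_compress_iSup {ι : Type*} [Nonempty ι] (v : ι → unitInterval) :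
    ⨆ i, compress (⨆ j, v j) (v i) = 1 := by
  refine unitInterval.iSup_eq_one.2 fun b hb => ?_
  by_cases h : ∃ i, ⨆ j, v j ≤ v i
  · obtain ⟨i, hi⟩ := h
    exact ⟨i, by rwa [compress_of_le hi]⟩
  simp only [not_exists, not_le] at h
  have hs : 0 < ⨆ j, v j := zero_le.trans_lt (h (Classical.arbitrary ι))
  obtain ⟨i, hi⟩ := lt_iSup_iff.1 (mul_lt_of_lt_one_left hs hb)
  refine ⟨i, ?_⟩
  rw [← Subtype.coe_lt_coe, coe_compress_of_lt (h i), lt_div_iff₀ (unitInterval.coe_pos.2 hs)]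
  rwa [← Subtype.coe_lt_coe, Set.Icc.coe_mul] at hi

end Compress

section Hex

variable {S : Signature} {I : Interp S} {μ : ℕ → I.D} {q : S.Pred} {fp : S.Pred → S.Func}
  {ps : List S.Pred}

lemma exists_withFuncs_val_hexFormula_eq_one (hq : (exQ q).val I μ = 1)
    (hfpArity : ∀ p ∈ ps, S.fArity (fp p) = S.pArity p)
    (hfpInj : ∀ p ∈ ps, ∀ p' ∈ ps, fp p = fp p' → p = p') :
    ∃ F : ∀ f : S.Func, (Fin (S.fArity f) → I.D) → I.D,
      (∀ f, (∀ p ∈ ps, fp p ≠ f) → F f = I.fI f) ∧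
        (hexFormula q fp ps).val (I.withFuncs F) μ = 1 := by
  classical
  rw [val_exQ, unitInterval.iSup_eq_one] at hq
  have hwit (b : unitInterval) : ∃ d, b ≠ 1 → b < I.pI q (fun _ => d) := by
    by_cases hb : b = 1
    · exact ⟨Classical.arbitrary _, fun h => (h hb).elim⟩
    · obtain ⟨d, hd⟩ := hq b (unitInterval.lt_one_iff_ne_one.2 hb)
      exact ⟨d, fun _ => hd⟩
  choose pick hpick using hwit
  -- padding the arguments avoids a cast along `S.fArity (fp p) = S.pArity p`
  let F : ∀ f : S.Func, (Fin (S.fArity f) → I.D) → I.D := fun f =>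
    if h : ∃ p ∈ ps, fp p = f then fun args =>
      pick (I.pI h.choose fun k =>
        if hk : (k : ℕ) < S.fArity f then args ⟨k, hk⟩ else Classical.arbitrary _)
    else I.fI f
  refine ⟨F, fun f hf => ?_, ?_⟩
  · refine dif_neg ?_
    rintro ⟨p, hp, he⟩
    exact hf p hp he
  refine val_hexFormula_eq_one.2 fun p hp => (val_hexConj_eq_one (hfpArity p hp)).2 fun ν => ?_
  have hex : ∃ p' ∈ ps, fp p' = fp p := ⟨p, hp, rfl⟩
  have hchoose : hex.choose = p := hfpInj _ hex.choose_spec.1 p hp hex.choose_spec.2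
  have hF : F (fp p) (fun k => ν k) = pick (I.pI p fun k => ν k) := by
    simp only [F, dif_pos hex]
    rw [hchoose]
    simp only [hfpArity p hp, Fin.is_lt, dite_true]
  by_cases h1 : I.pI p (fun k => ν k) = 1
  · exact Or.inl h1
  · right
    change _ < I.pI q fun _ => F (fp p) fun k => ν k
    rw [hF]
    exact hpick _ h1

lemma exists_truthEmbedding_val_exQ_eq_one (hq : q ∈ ps)
    (hfpArity : ∀ p ∈ ps, S.fArity (fp p) = S.pArity p)
    (hHex : (hexFormula q fp ps).val I μ = 1) :
    ∃ g V, TruthEmbedding g V ∧ (∀ p ∈ ps, ∀ args, I.pI p args ∈ V) ∧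
      (exQ q).val (I.mapVals g) μ = 1 := by
  set s := ⨆ d : I.D, I.pI q (fun _ => d)
  rw [val_hexFormula_eq_one] at hHex
  have hV : ∀ p ∈ ps, ∀ args, I.pI p args = 1 ∨ I.pI p args < s := fun p hp args =>
    (eq_one_or_lt_of_val_hexConj_eq_one (hfpArity p hp) (hHex p hp) args).imp_right
      fun ⟨d, hd⟩ => hd.trans_le (le_iSup (fun d => I.pI q fun _ => d) d)
  have hs : 0 < s := by
    have hd := le_iSup (fun d : I.D => I.pI q fun _ => d) (Classical.arbitrary _)
    rcases hV q hq (fun _ => Classical.arbitrary _) with h | h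
    · exact zero_lt_one.trans_le (h ▸ hd)
    · exact zero_le.trans_lt h
  refine ⟨compress s, _, truthEmbedding_compress hs, hV, ?_⟩
  exact (val_exQ (I := I.mapVals (compress s)) q μ).trans (iSup_compress_iSup _)

end Hex

theorem sat_skolemization_step2_general (S : Signature) (q : S.Pred)
    (m : ℕ) (pref : Fin (m + 1) → List Bool) (P : Fin (m + 1) → Formula S)
    (hQF : ∀ i, (P i).isQF)
    (skf : Fin (m + 1) → ℕ → S.Func)
    (ps : List S.Pred)
    (hps : ∀ p : S.Pred, p ∈ ps ↔ (p = q ∨ ∃ i, p ∈ (P i).predsIn))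
    (fp : S.Pred → S.Func)
    (hfpArity : ∀ p ∈ ps, S.fArity (fp p) = S.pArity p)
    (hfpFresh : ∀ p ∈ ps, ∀ i, fp p ∉ (P i).funcsIn)
    (hfpSkf : ∀ p ∈ ps, ∀ i, ∀ j ∈ exPos (pref i), fp p ≠ skf i j)
    (hfpInj : ∀ p ∈ ps, ∀ p' ∈ ps, fp p = fp p' → p = p') :
    sat1 (Formula.and (exQ q)
        (bigAnd (skq q (skf 0) (pref 0) (P 0))
          (List.ofFn (fun i : Fin m => skq q (skf i.succ) (pref i.succ) (P i.succ))))) ↔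
      sat1 (Formula.and (hexFormula q fp ps)
        (bigAnd (skq q (skf 0) (pref 0) (P 0))
          (List.ofFn (fun i : Fin m => skq q (skf i.succ) (pref i.succ) (P i.succ))))) := by
  simp only [sat1, Formula.val_and_eq_one,
    val_bigAnd_ofFn_eq_one fun i => skq q (skf i) (pref i) (P i)]
  constructor
  · rintro ⟨I, μ, hE, hSk⟩
    obtain ⟨F, hF, hHex⟩ := exists_withFuncs_val_hexFormula_eq_one hE hfpArity hfpInj
    refine ⟨I.withFuncs F, μ, hHex, fun i => ?_⟩
    refine (Formula.val_withFuncs _ (fun f hf => hF f fun p hp hpf => ?_) μ).trans (hSk i)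
    rcases funcsIn_skq q _ _ _ hf with hf | ⟨j, hj, rfl⟩
    · exact hfpFresh p hp i (hpf ▸ hf)
    · exact hfpSkf p hp i j hj hpf
  · rintro ⟨I, μ, hHex, hSk⟩
    have hq : q ∈ ps := (hps q).2 (Or.inl rfl)
    obtain ⟨g, V, hg, hV, hE⟩ := exists_truthEmbedding_val_exQ_eq_one hq hfpArity hHex
    refine ⟨I.mapVals g, μ, hE, fun i => ?_⟩
    refine (val_skq_mapVals q hg _ _ (hQF i) (fun p hp => hV p ?_) μ).trans (hSk i)
    rcases hp with rfl | hp
    exacts [hq, (hps p).2 (Or.inr ⟨i, hp⟩)]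

/-- SAT-Skolemization, step 2: for closed prenex formulas `A₁,…,Aₘ`
(prefix `pref i`, quantifier-free matrix `P i`) and a fresh monadic predicate symbol `q`,
`∃x q(x) ∧ sk_q(A₁) ∧ ⋯ ∧ sk_q(Aₘ)` is 1-satisfiable iff
`Hex(q,A) ∧ sk_q(A₁) ∧ ⋯ ∧ sk_q(Aₘ)` is 1-satisfiable.  Here `ps` lists (without
repetitions) the predicate symbols occurring in the `sk_q(Aᵢ)` (that is, `q` together
with the predicate symbols of the matrices), the Skolem function symbols `skf i j` are
fresh and of the correct arity, and the function symbols `f_p = fp p` are fresh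
(pairwise distinct, distinct from the `skf i j`, not occurring in the matrices) with
the arity of `p`. -/
theorem sat_skolemization_step2 (S : Signature) (q : S.Pred) (hq : S.pArity q = 1)
    (m : ℕ) (pref : Fin (m + 1) → List Bool) (P : Fin (m + 1) → Formula S)
    (hQF : ∀ i, (P i).isQF)
    (hclosed : ∀ i, ∀ v ∈ (P i).freeVars, v < (pref i).length)
    (hqfresh : ∀ i, q ∉ (P i).predsIn)
    (skf : Fin (m + 1) → ℕ → S.Func)
    (harity : ∀ i, ∀ j ∈ exPos (pref i), S.fArity (skf i j) = j + 1)
    (hfresh : ∀ i k, ∀ j ∈ exPos (pref i), skf i j ∉ (P k).funcsIn)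
    (hinj : ∀ i i', ∀ j ∈ exPos (pref i), ∀ j' ∈ exPos (pref i'),
      skf i j = skf i' j' → i = i' ∧ j = j')
    (ps : List S.Pred) (hnodup : ps.Nodup)
    (hps : ∀ p : S.Pred, p ∈ ps ↔ (p = q ∨ ∃ i, p ∈ (P i).predsIn))
    (fp : S.Pred → S.Func)
    (hfpArity : ∀ p ∈ ps, S.fArity (fp p) = S.pArity p)
    (hfpFresh : ∀ p ∈ ps, ∀ i, fp p ∉ (P i).funcsIn)
    (hfpSkf : ∀ p ∈ ps, ∀ i, ∀ j ∈ exPos (pref i), fp p ≠ skf i j)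
    (hfpInj : ∀ p ∈ ps, ∀ p' ∈ ps, fp p = fp p' → p = p') :
    sat1 (Formula.and (exQ q)
        (bigAnd (skq q (skf 0) (pref 0) (P 0))
          (List.ofFn (fun i : Fin m => skq q (skf i.succ) (pref i.succ) (P i.succ))))) ↔
      sat1 (Formula.and (hexFormula q fp ps)
        (bigAnd (skq q (skf 0) (pref 0) (P 0))
          (List.ofFn (fun i : Fin m => skq q (skf i.succ) (pref i.succ) (P i.succ))))) :=
  sat_skolemization_step2_general S q m pref P hQF skf ps hps fp hfpArity hfpFresh hfpSkf hfpInj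
end

section
/- Standard Skolemization preserves 1-satisfiability for △-guarded prenex formulas: let Q x̄ △B be a closed prenex formula of first-order Gödel logic with △ whose quantifier-free part is of the form △B, and let ∀x̄' △B^S be obtained by standard Skolemization for satisfiability, i.e. every existentially quantified variable x is replaced by a term f(ȳ) for a fresh function symbol f, where ȳ are the universally quantified variables in whose scope x occurs. Then Q x̄ △B is 1-satisfiable if and only if ∀x̄' △B^S is 1-satisfiable. -/
/-- The standard (satisfiability) Skolem substitution for a prenex prefix `pref`:
each existentially quantified variable `i` is replaced by the Skolem term
`sk i (ȳ)` where `ȳ` are the universally quantified variables `< i` (i.e. the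
universal quantifiers in whose scope `i` occurs); universal variables are kept. -/
def skSubstSatStd {S : Signature} (pref : List Bool) (sk : ℕ → S.Func) : ℕ → Term S :=
  fun i =>
    if pref.getD i true = false then
      Term.func (sk i) (fun j => Term.var ((univPos (pref.take i)).getD (j : ℕ) 0))
    else Term.var i

/-! Since `△B` takes only the values `0` and `1`, so does every prenex formula over it, and a
supremum of such values equals `1` only when it is attained. Hence a prenex formula over `△B`
with value `1` has a strategy choosing each existential value from the assignment built so far
that wins against all universal choices. The value of an existential variable in such a play
depends only on the universal choices before it, so it is a function of exactly the arguments
of its Skolem term. Conversely, evaluating the Skolem terms is a winning strategy, and a winning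
strategy forces value `1` for any matrix. -/

open Function

section TwoValued

variable {α : Type*} [CompleteLattice α] {ι : Sort*} {f : ι → α}

theorem iSup_eq_bot_or_eq_top (h : ∀ i, f i = ⊥ ∨ f i = ⊤) : iSup f = ⊥ ∨ iSup f = ⊤ := by
  by_cases htop : ∃ i, f i = ⊤
  · obtain ⟨i, hi⟩ := htop
    exact Or.inr (eq_top_iff.2 (hi ▸ le_iSup f i))
  · push Not at htop
    exact Or.inl (iSup_eq_bot.2 fun i => (h i).resolve_right (htop i))

theorem iInf_eq_bot_or_eq_top (h : ∀ i, f i = ⊥ ∨ f i = ⊤) : iInf f = ⊥ ∨ iInf f = ⊤ := by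
  by_cases hbot : ∃ i, f i = ⊥
  · obtain ⟨i, hi⟩ := hbot
    exact Or.inl (eq_bot_iff.2 (hi ▸ iInf_le f i))
  · push Not at hbot
    exact Or.inr (iInf_eq_top.2 fun i => (h i).resolve_left (hbot i))

theorem exists_eq_top_of_iSup_eq_top [Nontrivial α] (h : ∀ i, f i = ⊥ ∨ f i = ⊤)
    (hsup : iSup f = ⊤) : ∃ i, f i = ⊤ := by
  by_contra! hne
  exact bot_ne_top (hsup ▸ iSup_eq_bot.2 fun i => (h i).resolve_right (hne i)).symm

end TwoValued

namespace Term

variable {S : Signature} (I : Interp S)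

theorem eval_congr {μ₁ μ₂ : ℕ → I.D} :
    ∀ {t : Term S}, (∀ v ∈ t.vars, μ₁ v = μ₂ v) → t.eval I μ₁ = t.eval I μ₂
  | .var n, h => h n rfl
  | .func f _, h => congrArg (I.fI f) <| funext fun j =>
      eval_congr fun v hv => h v (Set.mem_iUnion_of_mem j hv)

theorem eval_congr_funcs {F : ∀ f : S.Func, (Fin (S.fArity f) → I.D) → I.D} (μ : ℕ → I.D) :
    ∀ {t : Term S}, (∀ f ∈ t.funcsIn, F f = I.fI f) → t.eval { I with fI := F } μ = t.eval I μ
  | .var _, _ => rfl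
  | .func f args, h => by
    change F f _ = I.fI f _
    rw [h f (Set.mem_insert f _)]
    exact congrArg (I.fI f) <| funext fun j =>
      eval_congr_funcs μ fun g hg => h g (Set.mem_insert_of_mem f (Set.mem_iUnion_of_mem j hg))

theorem eval_subst (σ : ℕ → Term S) (ν : ℕ → I.D) :
    ∀ t : Term S, (t.subst σ).eval I ν = t.eval I (fun v => (σ v).eval I ν)
  | .var _ => rfl
  | .func f args => congrArg (I.fI f) <| funext fun j => eval_subst σ ν (args j)

end Term

namespace Formula

variable {S : Signature} (I : Interp S)

theorem val_congr : ∀ {A : Formula S} {μ₁ μ₂ : ℕ → I.D},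
    (∀ v ∈ A.freeVars, μ₁ v = μ₂ v) → A.val I μ₁ = A.val I μ₂
  | .bot, _, _, _ | .top, _, _, _ => rfl
  | .atom p args, _, _, h => congrArg (I.pI p) <| funext fun j =>
      Term.eval_congr I fun v hv => h v (Set.mem_iUnion_of_mem j hv)
  | .and A B, _, _, h | .or A B, _, _, h | .imp A B, _, _, h => by
    simp only [val, val_congr fun v hv => h v (Or.inl hv), val_congr fun v hv => h v (Or.inr hv)]
  | .delta A, _, _, h => congrArg gdelta (val_congr h)
  | .all x A, μ₁, μ₂, h | .ex x A, μ₁, μ₂, h => by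
    simp only [val]
    congr 1
    funext d
    refine val_congr fun v hv => ?_
    by_cases hvx : v = x
    · simp [hvx]
    · simp only [update_of_ne hvx]
      exact h v ⟨hv, hvx⟩

theorem val_congr_funcs {F : ∀ f : S.Func, (Fin (S.fArity f) → I.D) → I.D} :
    ∀ {A : Formula S} (μ : ℕ → I.D),
      (∀ f ∈ A.funcsIn, F f = I.fI f) → A.val { I with fI := F } μ = A.val I μ
  | .bot, _, _ | .top, _, _ => rfl
  | .atom p args, μ, h => congrArg (I.pI p) <| funext fun j =>
      Term.eval_congr_funcs I μ fun f hf => h f (Set.mem_iUnion_of_mem j hf)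
  | .and A B, μ, h | .or A B, μ, h | .imp A B, μ, h => by
    simp only [val, val_congr_funcs μ fun f hf => h f (Or.inl hf),
      val_congr_funcs μ fun f hf => h f (Or.inr hf)]
  | .delta A, μ, h => congrArg gdelta (val_congr_funcs μ h)
  | .all x A, μ, h | .ex x A, μ, h => by
    simp only [val]
    congr 1
    funext d
    exact val_congr_funcs _ h

theorem val_subst (σ : ℕ → Term S) (ν : ℕ → I.D) :
    ∀ {A : Formula S}, A.isQF → (A.subst σ).val I ν = A.val I (fun v => (σ v).eval I ν)
  | .bot, _ | .top, _ => rfl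
  | .atom p args, _ => congrArg (I.pI p) <| funext fun j => Term.eval_subst I σ ν (args j)
  | .and A B, h | .or A B, h | .imp A B, h => by
    simp only [subst, val, val_subst σ ν h.1, val_subst σ ν h.2]
  | .delta A, h => congrArg gdelta (val_subst σ ν (A := A) h)

theorem val_delta_eq_zero_or_one (A : Formula S) (μ : ℕ → I.D) :
    (delta A).val I μ = 0 ∨ (delta A).val I μ = 1 := by
  simp only [val, gdelta]
  split_ifs <;> simp

end Formula

theorem val_allCloseList_eq_one_iff {S : Signature} (I : Interp S) (P : Formula S) :
    ∀ (xs : List ℕ) (μ : ℕ → I.D), (allCloseList xs P).val I μ = 1 ↔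
      ∀ ν : ℕ → I.D, (∀ v ∉ xs, ν v = μ v) → P.val I ν = 1
  | [], μ =>
    ⟨fun h ν hν => funext (fun v => hν v List.not_mem_nil) ▸ h, fun h => h μ fun _ _ => rfl⟩
  | x :: xs, μ => by
    change (⨅ d : I.D, (allCloseList xs P).val I (update μ x d)) = ⊤ ↔ _
    simp only [iInf_eq_top]
    constructor
    · intro h ν hν
      refine (val_allCloseList_eq_one_iff I P xs _).1 (h (ν x)) ν fun v hv => ?_
      by_cases hvx : v = x
      · simp [hvx]
      · rw [update_of_ne hvx]
        exact hν v (by simp [hvx, hv])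
    · intro h d
      refine (val_allCloseList_eq_one_iff I P xs _).2 fun ν hν => h ν fun v hv => ?_
      simp only [List.mem_cons, not_or] at hv
      rw [hν v hv.2, update_of_ne hv.1]

theorem val_buildPrenex_eq_zero_or_one {S : Signature} {I : Interp S} {P : Formula S}
    (hP : ∀ μ, P.val I μ = 0 ∨ P.val I μ = 1) :
    ∀ (pref : List Bool) (i : ℕ) (μ : ℕ → I.D),
      (buildPrenex pref i P).val I μ = 0 ∨ (buildPrenex pref i P).val I μ = 1
  | [], _, μ => hP μ
  | true :: rest, i, μ =>
    iInf_eq_bot_or_eq_top fun d => val_buildPrenex_eq_zero_or_one hP rest (i + 1) (update μ i d)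
  | false :: rest, i, μ =>
    iSup_eq_bot_or_eq_top fun d => val_buildPrenex_eq_zero_or_one hP rest (i + 1) (update μ i d)

/-- The play of the strategy `w` for the existential quantifiers of a prefix (whose variables
start at `i`) against the universal choices `ρ`. -/
def playPrefix {D : Type*} (w : ℕ → (ℕ → D) → D) : List Bool → ℕ → (ℕ → D) → (ℕ → D) → ℕ → D
  | [], _, μ, _ => μ
  | b :: rest, i, μ, ρ => playPrefix w rest (i + 1) (update μ i (bif b then ρ i else w i μ)) ρ

section Play

variable {D : Type*} {w : ℕ → (ℕ → D) → D}

theorem List.getElem?_cons_sub {α : Type*} {a : α} {l : List α} {i u : ℕ} (h : i < u) :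
    (a :: l)[u - i]? = l[u - (i + 1)]? := by
  rw [show u - i = u - (i + 1) + 1 by omega, List.getElem?_cons_succ]

theorem playPrefix_apply_of_lt {v : ℕ} :
    ∀ {rest : List Bool} {i : ℕ} {μ : ℕ → D} (ρ : ℕ → D), v < i →
      playPrefix w rest i μ ρ v = μ v
  | [], _, _, _, _ => rfl
  | _ :: _, i, _, ρ, h => by
    rw [playPrefix, playPrefix_apply_of_lt ρ (by omega), update_of_ne (by omega)]

theorem playPrefix_apply_of_univ {v : ℕ} :
    ∀ {rest : List Bool} {i : ℕ} {μ : ℕ → D} (ρ : ℕ → D), i ≤ v → rest[v - i]? = some true →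
      playPrefix w rest i μ ρ v = ρ v
  | [], _, _, _, _, hv => by simp at hv
  | b :: rest, i, μ, ρ, hiv, hv => by
    rw [playPrefix]
    rcases hiv.eq_or_lt with rfl | hlt
    · obtain rfl : b = true := by simpa using hv
      rw [playPrefix_apply_of_lt ρ (by omega), update_self]
      rfl
    · exact playPrefix_apply_of_univ ρ hlt (by rwa [← List.getElem?_cons_sub hlt])

theorem playPrefix_apply_of_ex {v : ℕ}
    (hw : ∀ μ₁ μ₂ : ℕ → D, (∀ u < v, μ₁ u = μ₂ u) → w v μ₁ = w v μ₂) :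
    ∀ {rest : List Bool} {i : ℕ} {μ : ℕ → D} (ρ : ℕ → D), i ≤ v → rest[v - i]? = some false →
      playPrefix w rest i μ ρ v = w v (playPrefix w rest i μ ρ)
  | [], _, _, _, _, hv => by simp at hv
  | b :: rest, i, μ, ρ, hiv, hv => by
    rw [playPrefix]
    rcases hiv.eq_or_lt with rfl | hlt
    · obtain rfl : b = false := by simpa using hv
      rw [playPrefix_apply_of_lt ρ (by omega), update_self]
      refine hw _ _ fun u hu => ?_
      rw [playPrefix_apply_of_lt ρ (by omega), update_of_ne (by omega)]
    · exact playPrefix_apply_of_ex hw ρ hlt (by rwa [← List.getElem?_cons_sub hlt])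

theorem playPrefix_apply_congr {v : ℕ} :
    ∀ {rest : List Bool} {i : ℕ} {μ : ℕ → D} {ρ₁ ρ₂ : ℕ → D},
      (∀ u, i ≤ u → u ≤ v → rest[u - i]? = some true → ρ₁ u = ρ₂ u) →
      playPrefix w rest i μ ρ₁ v = playPrefix w rest i μ ρ₂ v
  | [], _, _, _, _, _ => rfl
  | b :: rest, i, μ, ρ₁, ρ₂, h => by
    by_cases hiv : i ≤ v
    · have hρ : (bif b then ρ₁ i else w i μ) = (bif b then ρ₂ i else w i μ) := by
        cases b
        · rfl
        · exact h i le_rfl hiv (by simp)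
      rw [playPrefix, playPrefix, hρ]
      exact playPrefix_apply_congr fun u hiu huv hu =>
        h u (by omega) huv (by rwa [List.getElem?_cons_sub (by omega)])
    · rw [playPrefix_apply_of_lt ρ₁ (by omega), playPrefix_apply_of_lt ρ₂ (by omega)]

theorem playPrefix_update_of_lt {rest : List Bool} {i j : ℕ} (μ ρ : ℕ → D) (d : D) (h : j < i) :
    playPrefix w rest i μ (update ρ j d) = playPrefix w rest i μ ρ :=
  funext fun _ => playPrefix_apply_congr fun _ hiu _ _ => update_of_ne (by omega) _ _

theorem playPrefix_congr_strategy {w' : ℕ → (ℕ → D) → D} :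
    ∀ {rest : List Bool} {i : ℕ}, (∀ v, i ≤ v → w v = w' v) →
      playPrefix w rest i = playPrefix w' rest i
  | [], _, _ => rfl
  | b :: rest, i, h => by
    funext μ ρ
    rw [playPrefix, playPrefix, h i le_rfl,
      playPrefix_congr_strategy fun v hv => h v (by omega)]

end Play

section Prenex

variable {S : Signature} {I : Interp S} {P : Formula S}

theorem val_buildPrenex_eq_one_of_forall_playPrefix (w : ℕ → (ℕ → I.D) → I.D) :
    ∀ (rest : List Bool) (i : ℕ) (μ : ℕ → I.D),
      (∀ ρ, P.val I (playPrefix w rest i μ ρ) = 1) → (buildPrenex rest i P).val I μ = 1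
  | [], _, μ, h => h μ
  | true :: rest, i, μ, h => by
    change (⨅ d : I.D, (buildPrenex rest (i + 1) P).val I (update μ i d)) = ⊤
    refine iInf_eq_top.2 fun d =>
      val_buildPrenex_eq_one_of_forall_playPrefix w rest (i + 1) _ fun ρ => ?_
    have h' := h (update ρ i d)
    rwa [playPrefix, cond_true, update_self, playPrefix_update_of_lt _ _ _ (by omega)] at h'
  | false :: rest, i, μ, h => by
    change (⨆ d : I.D, (buildPrenex rest (i + 1) P).val I (update μ i d)) = ⊤
    refine eq_top_iff.2 (le_iSup_of_le (w i μ) (le_of_eq ?_))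
    exact (val_buildPrenex_eq_one_of_forall_playPrefix w rest (i + 1) (update μ i (w i μ)) h).symm

theorem exists_strategy_of_val_buildPrenex_eq_one (hP : ∀ μ, P.val I μ = 0 ∨ P.val I μ = 1) :
    ∀ (rest : List Bool) (i : ℕ), ∃ w : ℕ → (ℕ → I.D) → I.D, ∀ μ : ℕ → I.D,
      (buildPrenex rest i P).val I μ = 1 → ∀ ρ, P.val I (playPrefix w rest i μ ρ) = 1
  | [], _ => ⟨fun v μ => μ v, fun _ h _ => h⟩
  | true :: rest, i => by
    obtain ⟨w, hw⟩ := exists_strategy_of_val_buildPrenex_eq_one hP rest (i + 1)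
    refine ⟨w, fun μ hμ ρ => hw _ ?_ ρ⟩
    exact iInf_eq_top.1 (hμ : (⨅ d : I.D, (buildPrenex rest (i + 1) P).val I (update μ i d)) = ⊤) _
  | false :: rest, i => by
    obtain ⟨w, hw⟩ := exists_strategy_of_val_buildPrenex_eq_one hP rest (i + 1)
    let witness : (ℕ → I.D) → I.D := fun μ =>
      Classical.epsilon fun d => (buildPrenex rest (i + 1) P).val I (update μ i d) = 1
    refine ⟨update w i witness, fun μ hμ ρ => ?_⟩
    have hex := exists_eq_top_of_iSup_eq_top
      (fun d => val_buildPrenex_eq_zero_or_one hP rest (i + 1) (update μ i d)) hμ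
    rw [playPrefix, cond_false, update_self,
      playPrefix_congr_strategy fun v hv => update_of_ne (by omega) _ _]
    exact hw _ (Classical.epsilon_spec hex) ρ

end Prenex

section QuantifierPositions

variable {pref : List Bool} {u v : ℕ}

theorem mem_univPos_iff : u ∈ univPos pref ↔ pref[u]? = some true := by
  by_cases hu : u < pref.length <;> simp [univPos, List.getD_eq_getElem?_getD, hu]

theorem mem_exPos_iff : u ∈ exPos pref ↔ pref[u]? = some false := by
  by_cases hu : u < pref.length <;> simp [exPos, List.getD_eq_getElem?_getD, hu]

theorem mem_univPos_take_iff : u ∈ univPos (pref.take v) ↔ u < v ∧ pref[u]? = some true := by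
  rw [mem_univPos_iff, List.getElem?_take]
  split_ifs with h <;> simp [h]

theorem mem_univPos_or_mem_exPos (h : v < pref.length) : v ∈ univPos pref ∨ v ∈ exPos pref := by
  rw [mem_univPos_iff, mem_exPos_iff, List.getElem?_eq_getElem h]
  cases pref[v] <;> simp

theorem mem_univPos_take_of_le (hv : v ∈ exPos pref) (huv : u ≤ v) (hu : pref[u]? = some true) :
    u ∈ univPos (pref.take v) := by
  refine mem_univPos_take_iff.2 ⟨huv.lt_of_ne ?_, hu⟩
  rintro rfl
  simp [mem_exPos_iff.1 hv] at hu

end QuantifierPositions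

section Skolem

variable {S : Signature} {pref : List Bool} {sk : ℕ → S.Func} {v : ℕ}

theorem skSubstSatStd_of_mem_univPos (hv : v ∈ univPos pref) :
    skSubstSatStd pref sk v = .var v := by
  simp [skSubstSatStd, List.getD_eq_getElem?_getD, mem_univPos_iff.1 hv]

theorem skSubstSatStd_of_mem_exPos (hv : v ∈ exPos pref) :
    skSubstSatStd pref sk v = .func (sk v) fun j => .var ((univPos (pref.take v)).getD j 0) := by
  simp [skSubstSatStd, List.getD_eq_getElem?_getD, mem_exPos_iff.1 hv]

theorem eval_skSubstSatStd_congr (I : Interp S) (hv : v ∈ exPos pref)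
    (harity : S.fArity (sk v) = (univPos (pref.take v)).length) {ν₁ ν₂ : ℕ → I.D}
    (h : ∀ u ∈ univPos (pref.take v), ν₁ u = ν₂ u) :
    (skSubstSatStd pref sk v).eval I ν₁ = (skSubstSatStd pref sk v).eval I ν₂ := by
  rw [skSubstSatStd_of_mem_exPos hv]
  refine congrArg (I.fI (sk v)) (funext fun j => h _ ?_)
  rw [List.getD_eq_getElem _ _ (harity ▸ j.isLt)]
  exact List.getElem_mem _

/-- `sk v` reads its arguments as the values of the universal variables preceding `v`. -/
noncomputable def skolemFuncs {D : Type} [Nonempty D] (pref : List Bool) (sk : ℕ → S.Func)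
    (F : ∀ f : S.Func, (Fin (S.fArity f) → D) → D) (g : ℕ → (ℕ → D) → D) :
    ∀ f : S.Func, (Fin (S.fArity f) → D) → D := fun f args =>
  open Classical in
  if hf : ∃ v ∈ exPos pref, sk v = f then
    let args' : ℕ → D := fun j =>
      if hj : j < S.fArity f then args ⟨j, hj⟩ else Classical.arbitrary D
    g hf.choose fun u => args' ((univPos (pref.take hf.choose)).idxOf u)
  else F f args

theorem skolemFuncs_of_forall_ne {D : Type} [Nonempty D]
    {F : ∀ f : S.Func, (Fin (S.fArity f) → D) → D}
    {g : ℕ → (ℕ → D) → D} {f : S.Func} (hf : ∀ v ∈ exPos pref, sk v ≠ f) :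
    skolemFuncs pref sk F g f = F f := by
  funext args
  rw [skolemFuncs, dif_neg (by simpa using hf)]

theorem eval_skSubstSatStd_skolemFuncs (I : Interp S) (g : ℕ → (ℕ → I.D) → I.D)
    (hinj : ∀ i ∈ exPos pref, ∀ j ∈ exPos pref, sk i = sk j → i = j) (hv : v ∈ exPos pref)
    (harity : S.fArity (sk v) = (univPos (pref.take v)).length)
    (hg : ∀ ν₁ ν₂ : ℕ → I.D, (∀ u ∈ univPos (pref.take v), ν₁ u = ν₂ u) → g v ν₁ = g v ν₂)
    (ν : ℕ → I.D) :
    (skSubstSatStd pref sk v).eval { I with fI := skolemFuncs pref sk I.fI g } ν = g v ν := by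
  have hf : ∃ i ∈ exPos pref, sk i = sk v := ⟨v, hv, rfl⟩
  have hchoose : hf.choose = v := hinj _ hf.choose_spec.1 v hv hf.choose_spec.2
  rw [skSubstSatStd_of_mem_exPos hv]
  change skolemFuncs pref sk I.fI g (sk v) _ = _
  rw [skolemFuncs, dif_pos hf]
  simp only [hchoose]
  refine hg _ _ fun u hu => ?_
  have hidx : (univPos (pref.take v)).idxOf u < S.fArity (sk v) :=
    harity ▸ List.idxOf_lt_length_iff.2 hu
  simp only [dif_pos hidx]
  change ν ((univPos (pref.take v)).getD _ 0) = ν u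
  rw [List.getD_eq_getElem _ _ (harity ▸ hidx), List.getElem_idxOf]

end Skolem

section Skolemization

variable {S : Signature} {pref : List Bool} {B : Formula S} {sk : ℕ → S.Func}

theorem sat1_skolem_of_sat1_prenex (hQF : B.isQF) (hvars : ∀ v ∈ B.freeVars, v < pref.length)
    (harity : ∀ i ∈ exPos pref, S.fArity (sk i) = (univPos (pref.take i)).length)
    (hfresh : ∀ i ∈ exPos pref, sk i ∉ B.funcsIn)
    (hinj : ∀ i ∈ exPos pref, ∀ j ∈ exPos pref, sk i = sk j → i = j) :
    sat1 (buildPrenex pref 0 B.delta) →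
      sat1 (allCloseList (univPos pref) (B.subst (skSubstSatStd pref sk)).delta) := by
  rintro ⟨I, μ₀, hval⟩
  obtain ⟨w, hw⟩ :=
    exists_strategy_of_val_buildPrenex_eq_one (Formula.val_delta_eq_zero_or_one I B) pref 0
  let g : ℕ → (ℕ → I.D) → I.D := fun v ν => playPrefix w pref 0 μ₀ ν v
  let J : Interp S := { I with fI := skolemFuncs pref sk I.fI g }
  refine ⟨J, μ₀, (val_allCloseList_eq_one_iff J _ _ μ₀).2 fun ν _ => ?_⟩
  have heval : ∀ v ∈ B.freeVars, (skSubstSatStd pref sk v).eval J ν = g v ν := by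
    intro v hv
    rcases mem_univPos_or_mem_exPos (hvars v hv) with hu | he
    · rw [skSubstSatStd_of_mem_univPos hu]
      exact (playPrefix_apply_of_univ ν v.zero_le (by simpa using mem_univPos_iff.1 hu)).symm
    · refine eval_skSubstSatStd_skolemFuncs I g hinj he (harity v he) (fun ν₁ ν₂ h => ?_) ν
      exact playPrefix_apply_congr fun u _ huv hu =>
        h u (mem_univPos_take_of_le he huv (by simpa using hu))
  have hfresh' : ∀ f ∈ B.funcsIn, skolemFuncs pref sk I.fI g f = I.fI f :=
    fun f hf => skolemFuncs_of_forall_ne fun i hi hif => hfresh i hi (hif ▸ hf)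
  refine Eq.trans (congrArg gdelta ?_) (hw μ₀ hval ν)
  rw [Formula.val_subst J _ ν hQF, Formula.val_congr_funcs I _ hfresh']
  exact Formula.val_congr I heval

theorem sat1_prenex_of_sat1_skolem (hQF : B.isQF) (hvars : ∀ v ∈ B.freeVars, v < pref.length)
    (harity : ∀ i ∈ exPos pref, S.fArity (sk i) = (univPos (pref.take i)).length) :
    sat1 (allCloseList (univPos pref) (B.subst (skSubstSatStd pref sk)).delta) →
      sat1 (buildPrenex pref 0 B.delta) := by
  rintro ⟨I, μ, hval⟩
  let w : ℕ → (ℕ → I.D) → I.D := fun v ν => (skSubstSatStd pref sk v).eval I ν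
  refine ⟨I, μ, val_buildPrenex_eq_one_of_forall_playPrefix w pref 0 μ fun ρ => ?_⟩
  let ν : ℕ → I.D := fun u => if u ∈ univPos pref then ρ u else μ u
  have hplay : ∀ v ∈ B.freeVars, playPrefix w pref 0 μ ρ v = w v ν := by
    intro v hv
    rcases mem_univPos_or_mem_exPos (hvars v hv) with hu | he
    · rw [playPrefix_apply_of_univ ρ v.zero_le (by simpa using mem_univPos_iff.1 hu)]
      simp [w, ν, skSubstSatStd_of_mem_univPos hu, Term.eval, hu]
    · have hdep : ∀ ν₁ ν₂ : ℕ → I.D, (∀ u ∈ univPos (pref.take v), ν₁ u = ν₂ u) →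
          w v ν₁ = w v ν₂ := fun _ _ => eval_skSubstSatStd_congr I he (harity v he)
      rw [playPrefix_apply_of_ex
        (fun ν₁ ν₂ h => hdep ν₁ ν₂ fun u hu => h u (mem_univPos_take_iff.1 hu).1)
        ρ v.zero_le (by simpa using mem_exPos_iff.1 he)]
      refine hdep _ _ fun u hu => ?_
      have hu' := (mem_univPos_take_iff.1 hu).2
      rw [playPrefix_apply_of_univ ρ u.zero_le (by simpa using hu')]
      exact (if_pos (mem_univPos_iff.2 hu')).symm
  have hν := (val_allCloseList_eq_one_iff I _ _ μ).1 hval ν fun v hv => if_neg hv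
  refine Eq.trans (congrArg gdelta ?_) hν
  rw [Formula.val_congr I hplay, Formula.val_subst I _ ν hQF]

end Skolemization

/-- standard Skolemization preserves 1-satisfiability for △-guarded prenex
formulas `Q x̄ △B` (`B` quantifier free): `Q x̄ △B` is 1-satisfiable iff `∀x̄' △B^S` is,
where the Skolem function symbols `sk i` are fresh (pairwise distinct, not occurring in
`B`) and of the correct arity. -/
theorem delta_guarded_standard_skolemization_sat (S : Signature)
    (pref : List Bool) (B : Formula S) (hQF : B.isQF)
    (hvars : ∀ v ∈ B.freeVars, v < pref.length)
    (sk : ℕ → S.Func)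
    (harity : ∀ i ∈ exPos pref, S.fArity (sk i) = (univPos (List.take i pref)).length)
    (hfresh : ∀ i ∈ exPos pref, sk i ∉ B.funcsIn)
    (hinj : ∀ i ∈ exPos pref, ∀ j ∈ exPos pref, sk i = sk j → i = j) :
    sat1 (buildPrenex pref 0 (Formula.delta B)) ↔
      sat1 (allCloseList (univPos pref)
        (Formula.delta (B.subst (skSubstSatStd pref sk)))) :=
  ⟨sat1_skolem_of_sat1_prenex hQF hvars harity hfresh hinj,
    sat1_prenex_of_sat1_skolem hQF hvars harity⟩
end

section
/- For every quantifier-free formula A of first-order Gödel logic with △ with free variables x̄: ∃x̄ A is valid if and only if ∃x̄ △A is valid. -/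
/-!
Rescaling all atomic values by a strictly monotone map of `[0,1]` that fixes `0` and `1`
commutes with the Gödel connectives and `△`, hence with the value of every quantifier-free
formula. Take for it `squash`, which sends `[0,1)` into `[0,1/2]`. If `∃x̄ A` is valid
but `A` never takes value `1` in an interpretation `I`, then in the squashed interpretation
all values of `A` are at most `1/2`, and so is the value of `∃x̄ A`: a contradiction. Hence
`A`, and with it `△A`, takes value `1` at some assignment of `x̄`, in every interpretation.
The converse holds because `△A ≤ A`.
-/

lemma gdelta_le (a : unitInterval) : gdelta a ≤ a := by
  unfold gdelta
  split_ifs with ha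
  · exact ha.ge
  · exact unitInterval.nonneg a

section StrictMono

variable {h : unitInterval → unitInterval}

lemma StrictMono.map_gimp (hh : StrictMono h) (h1 : h 1 = 1) (a b : unitInterval) :
    h (gimp a b) = gimp (h a) (h b) := by
  unfold gimp
  simp only [hh.le_iff_le]
  split_ifs
  · exact h1
  · rfl

lemma StrictMono.map_gdelta (hh : StrictMono h) (h0 : h 0 = 0) (h1 : h 1 = 1)
    (a : unitInterval) : h (gdelta a) = gdelta (h a) := by
  have hone : h a = 1 ↔ a = 1 := hh.injective.eq_iff' h1
  unfold gdelta
  by_cases ha : a = 1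
  · rw [if_pos ha, if_pos (hone.2 ha), h1]
  · rw [if_neg ha, if_neg (mt hone.1 ha), h0]

end StrictMono

noncomputable def squash (a : unitInterval) : unitInterval :=
  if a = 1 then 1 else ⟨a / 2, by have := a.2; constructor <;> linarith [this.1, this.2]⟩

lemma squash_one : squash 1 = 1 := if_pos rfl

lemma coe_squash_of_ne_one {a : unitInterval} (ha : a ≠ 1) : (squash a : ℝ) = a / 2 := by
  simp [squash, ha]

lemma squash_zero : squash 0 = 0 :=
  Subtype.ext (by rw [coe_squash_of_ne_one zero_ne_one]; simp)

lemma coe_squash_le_half {a : unitInterval} (ha : a ≠ 1) : (squash a : ℝ) ≤ 1 / 2 := by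
  rw [coe_squash_of_ne_one ha]
  linarith [unitInterval.le_one a]

lemma squash_strictMono : StrictMono squash := by
  intro a b hab
  have ha : a ≠ 1 := (hab.trans_le (unitInterval.le_one b)).ne
  show (squash a : ℝ) < squash b
  by_cases hb : b = 1
  · rw [hb, squash_one, Set.Icc.coe_one]
    linarith [coe_squash_le_half ha]
  · rw [coe_squash_of_ne_one ha, coe_squash_of_ne_one hb]
    exact div_lt_div_of_pos_right hab two_pos

variable {S : Signature}

def Interp.mapPred (I : Interp S) (h : unitInterval → unitInterval) : Interp S :=
  { I with pI := fun p d => h (I.pI p d) }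

lemma Term.eval_mapPred (I : Interp S) (h : unitInterval → unitInterval) (μ : ℕ → I.D)
    (t : Term S) : t.eval (I.mapPred h) μ = t.eval I μ := by
  induction t with
  | var n => rfl
  | func f args ih => exact congrArg (I.fI f) (funext ih)

lemma Formula.val_mapPred (I : Interp S) {h : unitInterval → unitInterval}
    (hh : StrictMono h) (h0 : h 0 = 0) (h1 : h 1 = 1) (μ : ℕ → I.D) {A : Formula S}
    (hA : A.isQF) : A.val (I.mapPred h) μ = h (A.val I μ) := by
  induction A with
  | bot => exact h0.symm
  | top => exact h1.symm
  | atom p args =>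
    show h _ = h _
    simp only [Term.eval_mapPred, Formula.val]
  | and A B ihA ihB => simp only [Formula.val, ihA hA.1, ihB hA.2, hh.monotone.map_min]
  | or A B ihA ihB => simp only [Formula.val, ihA hA.1, ihB hA.2, hh.monotone.map_max]
  | imp A B ihA ihB => simp only [Formula.val, ihA hA.1, ihB hA.2, hh.map_gimp h1]
  | delta A ih => simp only [Formula.val, ih hA, hh.map_gdelta h0 h1]
  | all => exact hA.elim
  | ex => exact hA.elim

section exCloseList

variable (I : Interp S) (A : Formula S)

lemma val_exCloseList_le {c : unitInterval} (xs : List ℕ) (μ : ℕ → I.D)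
    (hc : ∀ μ' : ℕ → I.D, (∀ n ∉ xs, μ' n = μ n) → A.val I μ' ≤ c) :
    (exCloseList xs A).val I μ ≤ c := by
  induction xs generalizing μ with
  | nil => exact hc μ fun n _ => rfl
  | cons x xs ih =>
    refine iSup_le fun d => ih _ fun μ' hμ' => hc μ' fun n hn => ?_
    rw [hμ' n fun h => hn (List.mem_cons_of_mem x h),
      Function.update_of_ne (by rintro rfl; simp at hn)]

lemma le_val_exCloseList (xs : List ℕ) {μ μ' : ℕ → I.D} (hμ' : ∀ n ∉ xs, μ' n = μ n) :
    A.val I μ' ≤ (exCloseList xs A).val I μ := by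
  induction xs generalizing μ with
  | nil => rw [funext fun n => hμ' n List.not_mem_nil]; rfl
  | cons x xs ih =>
    refine (ih fun n hn => ?_).trans (le_iSup (fun d => (exCloseList xs A).val I
      (Function.update μ x d)) (μ' x))
    by_cases hnx : n = x
    · rw [hnx, Function.update_self]
    · rw [Function.update_of_ne hnx]
      exact hμ' n (by simp [hnx, hn])

lemma val_exCloseList_mono {B : Formula S} (hAB : ∀ μ, A.val I μ ≤ B.val I μ)
    (xs : List ℕ) (μ : ℕ → I.D) :
    (exCloseList xs A).val I μ ≤ (exCloseList xs B).val I μ :=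
  val_exCloseList_le I A xs μ fun μ' hμ' => (hAB μ').trans (le_val_exCloseList I B xs hμ')

end exCloseList

lemma exists_val_eq_one_of_valid_exCloseList {A : Formula S} (hA : A.isQF) {xs : List ℕ}
    (hvalid : valid (exCloseList xs A)) (I : Interp S) (μ : ℕ → I.D) :
    ∃ μ' : ℕ → I.D, (∀ n ∉ xs, μ' n = μ n) ∧ A.val I μ' = 1 := by
  by_contra! hne
  have hhalf : (exCloseList xs A).val (I.mapPred squash) μ ≤ ⟨1 / 2, by norm_num, by norm_num⟩ :=
    val_exCloseList_le (I.mapPred squash) A xs μ fun μ' hμ' => by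
      rw [Formula.val_mapPred I squash_strictMono squash_zero squash_one μ' hA]
      exact coe_squash_le_half (hne μ' hμ')
  rw [hvalid (I.mapPred squash) μ] at hhalf
  norm_num [← Subtype.coe_le_coe] at hhalf

theorem valid_exists_iff_valid_exists_delta_general (S : Signature) (A : Formula S)
    (hQF : A.isQF) (k : ℕ) :
    valid (exCloseList (List.range k) A) ↔
      valid (exCloseList (List.range k) (Formula.delta A)) := by
  constructor
  · intro hvalid I μ
    obtain ⟨μ', hμ', hA⟩ := exists_val_eq_one_of_valid_exCloseList hQF hvalid I μ
    have hδA : (Formula.delta A).val I μ' = 1 := by simp [Formula.val, gdelta, hA]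
    exact le_antisymm (unitInterval.le_one _) (hδA ▸ le_val_exCloseList I _ _ hμ')
  · intro hvalid I μ
    refine le_antisymm (unitInterval.le_one _) ((hvalid I μ).symm.le.trans ?_)
    exact val_exCloseList_mono I A.delta (B := A) (fun μ' => gdelta_le (A.val I μ')) _ μ

/-- for a quantifier-free formula `A` with free variables among
`x₀,…,x_{k-1}`, the formula `∃x̄ A` is valid iff `∃x̄ △A` is valid. -/
theorem valid_exists_iff_valid_exists_delta (S : Signature) (A : Formula S)
    (hQF : A.isQF) (k : ℕ) (hvars : ∀ v ∈ A.freeVars, v < k) :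
    valid (exCloseList (List.range k) A) ↔
      valid (exCloseList (List.range k) (Formula.delta A)) :=
  valid_exists_iff_valid_exists_delta_general S A hQF k
end
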